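/- Let n be a positive integer and F a field. Let A be the generic n×n matrix over the polynomial ring F[a_{i,j} : (i,j) ∈ {1,...,n}²], whose (i,j)-entry is the indeterminate a_{i,j}. Then det A is an irreducible polynomial in F[a_{i,j}]. -/

import Mathlib

/-!
The determinant `D` of the generic matrix is homogeneous of degree one in the variables of each
row, and in those of each column. Over a domain, the factors of a weighted homogeneous polynomial
are weighted homogeneous, so in a factorisation `D = f * g` the variables of any one row occur in
only one of the factors, and likewise for columns. If `f` is not constant it contains a variable
of some row `k`, and if `g` is not constant it contains a variable of some column `l`; then
`X (k, l)` occurs in neither factor, although it occurs in `D`, in the monomial of any permutation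
sending `l` to `k`.
-/

open Matrix MvPolynomial Finsupp

namespace MvPolynomial

variable {σ R : Type*} [CommSemiring R] {w : σ → ℕ} {p q : MvPolynomial σ R} {a b m : ℕ}

/-- The hypothesis `h` holds when `a` and `b` are the largest weights occurring in `p` and `q`,
and also when they are the smallest ones. -/
theorem weightedHomogeneousComponent_add_mul_of_extremal
    (h : ∀ u ∈ p.support, ∀ v ∈ q.support, weight w u + weight w v = a + b → weight w u = a) :
    weightedHomogeneousComponent w (a + b) (p * q) =
      weightedHomogeneousComponent w a p * weightedHomogeneousComponent w b q := by
  classical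
  ext d
  have hPQ := (weightedHomogeneousComponent_isWeightedHomogeneous (w := w) a p).mul
    (weightedHomogeneousComponent_isWeightedHomogeneous (w := w) b q)
  rw [coeff_weightedHomogeneousComponent]
  split_ifs with hd
  · rw [coeff_mul, coeff_mul]
    refine Finset.sum_congr rfl fun ⟨u, v⟩ huv => ?_
    rw [Finset.HasAntidiagonal.mem_antidiagonal] at huv
    simp only [coeff_weightedHomogeneousComponent]
    by_cases hu : coeff u p = 0
    · simp [hu]
    by_cases hv : coeff v q = 0
    · simp [hv]
    have hsum : weight w u + weight w v = a + b := by rw [← map_add, huv, hd]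
    have hua := h u (mem_support_iff.2 hu) v (mem_support_iff.2 hv) hsum
    rw [if_pos hua, if_pos (by omega)]
  · exact (hPQ.coeff_eq_zero d hd).symm

theorem IsWeightedHomogeneous.add_eq_of_extremal [NoZeroDivisors R]
    (hpq : IsWeightedHomogeneous w (p * q) m)
    (ha : ∃ u ∈ p.support, weight w u = a) (hb : ∃ v ∈ q.support, weight w v = b)
    (h : ∀ u ∈ p.support, ∀ v ∈ q.support, weight w u + weight w v = a + b → weight w u = a) :
    a + b = m := by
  classical
  have hcomp_ne_zero {r : MvPolynomial σ R} {c : ℕ} (hc : ∃ u ∈ r.support, weight w u = c) :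
      weightedHomogeneousComponent w c r ≠ 0 := by
    obtain ⟨u, hu, huc⟩ := hc
    rw [← support_nonempty, support_weightedHomogeneousComponent]
    exact ⟨u, Finset.mem_filter.2 ⟨hu, huc⟩⟩
  by_contra hne
  apply mul_ne_zero (hcomp_ne_zero ha) (hcomp_ne_zero hb)
  rw [← weightedHomogeneousComponent_add_mul_of_extremal h]
  exact hpq.weightedHomogeneousComponent_ne _ hne

theorem IsWeightedHomogeneous.of_mul [NoZeroDivisors R]
    (hpq : IsWeightedHomogeneous w (p * q) m) (hp : p ≠ 0) (hq : q ≠ 0) :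
    ∃ a b, a + b = m ∧ IsWeightedHomogeneous w p a ∧ IsWeightedHomogeneous w q b := by
  classical
  have hP := (support_nonempty.2 hp).image (weight w)
  have hQ := (support_nonempty.2 hq).image (weight w)
  have attained {r : MvPolynomial σ R} {c : ℕ} (hc : c ∈ r.support.image (weight w)) :
      ∃ u ∈ r.support, weight w u = c := Finset.mem_image.1 hc
  have bounds {r : MvPolynomial σ R} (hr) {u} (hu : u ∈ r.support) :
      (r.support.image (weight w)).min' hr ≤ weight w u ∧
        weight w u ≤ (r.support.image (weight w)).max' hr :=
    ⟨Finset.min'_le _ _ (Finset.mem_image_of_mem _ hu),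
      Finset.le_max' _ _ (Finset.mem_image_of_mem _ hu)⟩
  have hmax := hpq.add_eq_of_extremal (attained (Finset.max'_mem _ hP))
    (attained (Finset.max'_mem _ hQ)) fun u hu v hv _ => by
      have := bounds hP hu; have := bounds hQ hv; omega
  have hmin := hpq.add_eq_of_extremal (attained (Finset.min'_mem _ hP))
    (attained (Finset.min'_mem _ hQ)) fun u hu v hv _ => by
      have := bounds hP hu; have := bounds hQ hv; omega
  have := Finset.min'_le_max' _ hP
  have := Finset.min'_le_max' _ hQ
  refine ⟨_, _, hmax, fun d hd => ?_, fun d hd => ?_⟩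
  · have := bounds hP (mem_support_iff.2 hd); omega
  · have := bounds hQ (mem_support_iff.2 hd); omega

theorem IsWeightedHomogeneous.notMem_vars (hp : IsWeightedHomogeneous w p 0) {s : σ}
    (hs : w s ≠ 0) : s ∉ p.vars := by
  rw [mem_vars_iff_mem_support]
  rintro ⟨d, hd, hsd⟩
  have := le_weight_of_ne_zero' w (Finsupp.mem_support_iff.1 hsd)
  rw [hp (mem_support_iff.1 hd)] at this
  omega

theorem IsWeightedHomogeneous.notMem_vars_right_of_mem_vars_left [NoZeroDivisors R]
    (hpq : IsWeightedHomogeneous w (p * q) 1) (hp : p ≠ 0) (hq : q ≠ 0) {s t : σ}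
    (hs : s ∈ p.vars) (hws : w s ≠ 0) (hwt : w t ≠ 0) : t ∉ q.vars := by
  obtain ⟨a, b, hab, hpa, hqb⟩ := hpq.of_mul hp hq
  have ha : a ≠ 0 := by
    rintro rfl
    exact hpa.notMem_vars hws hs
  obtain rfl : b = 0 := by omega
  exact hqb.notMem_vars hwt

theorem isUnit_iff_ne_zero_and_vars_eq_empty {K : Type*} [Field K] {p : MvPolynomial σ K} :
    IsUnit p ↔ p ≠ 0 ∧ p.vars = ∅ := by
  rw [vars_eq_empty_iff_eq_C]
  constructor
  · intro hp
    obtain ⟨r, -, rfl⟩ := isUnit_iff_eq_C_of_isReduced.1 hp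
    exact ⟨hp.ne_zero, by rw [coeff_zero_C]⟩
  · rintro ⟨hp, hC⟩
    rw [hC] at hp ⊢
    exact (isUnit_iff_ne_zero.2 fun h => hp (by rw [h, C_0])).map C

end MvPolynomial

namespace Matrix

open Equiv

variable {n R : Type*} [Fintype n]

/-- The exponent vector of the monomial `∏ k, X (σ k, k)` contributed by `σ` to the determinant. -/
noncomputable def permExponent (σ : Perm n) : n × n →₀ ℕ :=
  ∑ k, Finsupp.single (σ k, k) 1

theorem weight_permExponent (w : n × n → ℕ) (σ : Perm n) :
    weight w (permExponent σ) = ∑ k, w (σ k, k) := by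
  simp [permExponent, map_sum, weight_single]

variable [DecidableEq n]

theorem permExponent_apply (σ : Perm n) (x : n × n) :
    permExponent σ x = if σ x.2 = x.1 then 1 else 0 := by
  rw [permExponent, Finsupp.finsetSum_apply, Finset.sum_eq_single x.2]
  · simp [Finsupp.single_apply, Prod.ext_iff, eq_comm]
  · intro k _ hk
    simp [Prod.ext_iff, hk]
  · simp

theorem permExponent_injective : Function.Injective (permExponent (n := n)) := by
  intro σ τ h
  ext k
  have := congrArg (· (σ k, k)) h
  simpa [permExponent_apply, eq_comm] using this

variable [CommRing R]

theorem det_mvPolynomialX_eq_sum :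
    det (mvPolynomialX n n R) =
      ∑ σ : Perm n, monomial (permExponent σ) ((Perm.sign σ : ℤ) : R) := by
  rw [det_apply]
  refine Finset.sum_congr rfl fun σ _ => ?_
  rw [permExponent, monomial_sum_index, Units.smul_def, zsmul_eq_mul,
    ← map_intCast (C : R →+* MvPolynomial (n × n) R)]
  simp [mvPolynomialX_apply, X]

theorem coeff_permExponent_det_mvPolynomialX (σ : Perm n) :
    coeff (permExponent σ) (det (mvPolynomialX n n R)) = ((Perm.sign σ : ℤ) : R) := by
  rw [det_mvPolynomialX_eq_sum, coeff_sum, Finset.sum_eq_single σ]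
  · rw [coeff_monomial, if_pos rfl]
  · intro τ _ hτ
    rw [coeff_monomial, if_neg (permExponent_injective.ne hτ)]
  · simp

theorem mem_vars_det_mvPolynomialX [Nontrivial R] (i j : n) :
    (i, j) ∈ (det (mvPolynomialX n n R)).vars := by
  rw [mem_vars_iff_mem_support]
  refine ⟨permExponent (Equiv.swap i j), ?_, ?_⟩
  · rw [MvPolynomial.mem_support_iff, coeff_permExponent_det_mvPolynomialX]
    exact ((Perm.sign _).isUnit.map (Int.castRingHom R)).ne_zero
  · simp [permExponent_apply]

theorem isWeightedHomogeneous_det_mvPolynomialX {w : n × n → ℕ} {e : ℕ}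
    (hw : ∀ σ : Perm n, ∑ k, w (σ k, k) = e) :
    IsWeightedHomogeneous w (det (mvPolynomialX n n R)) e := by
  rw [det_mvPolynomialX_eq_sum]
  exact IsWeightedHomogeneous.sum _ _ _ fun σ _ =>
    isWeightedHomogeneous_monomial _ _ _ ((weight_permExponent w σ).trans (hw σ))

theorem isWeightedHomogeneous_row_det_mvPolynomialX (i : n) :
    IsWeightedHomogeneous (fun x : n × n => if x.1 = i then 1 else 0)
      (det (mvPolynomialX n n R)) 1 :=
  isWeightedHomogeneous_det_mvPolynomialX fun σ => by
    simp [← Equiv.eq_symm_apply]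

theorem isWeightedHomogeneous_col_det_mvPolynomialX (j : n) :
    IsWeightedHomogeneous (fun x : n × n => if x.2 = j then 1 else 0)
      (det (mvPolynomialX n n R)) 1 :=
  isWeightedHomogeneous_det_mvPolynomialX fun σ => by simp

theorem irreducible_det_mvPolynomialX {K : Type*} [Field K] [Nonempty n] :
    Irreducible (det (mvPolynomialX n n K)) := by
  refine ⟨fun hD => ?_, fun f g hfg => ?_⟩
  · obtain ⟨i⟩ := ‹Nonempty n›
    exact Finset.ne_empty_of_mem (mem_vars_det_mvPolynomialX i i)
      (isUnit_iff_ne_zero_and_vars_eq_empty.1 hD).2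
  by_contra! hunits
  obtain ⟨hf, hg⟩ := mul_ne_zero_iff.1 (hfg ▸ det_mvPolynomialX_ne_zero n K)
  have exists_mem_vars {p : MvPolynomial (n × n) K} (hp : p ≠ 0) (hpu : ¬IsUnit p) :
      ∃ x, x ∈ p.vars :=
    Finset.nonempty_iff_ne_empty.2 fun h => hpu (isUnit_iff_ne_zero_and_vars_eq_empty.2 ⟨hp, h⟩)
  obtain ⟨⟨k, l⟩, hkl⟩ := exists_mem_vars hf hunits.1
  obtain ⟨⟨k', l'⟩, hkl'⟩ := exists_mem_vars hg hunits.2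
  have hrow := hfg ▸ isWeightedHomogeneous_row_det_mvPolynomialX (R := K) k
  have hcol :=
    (hfg.trans (mul_comm f g)) ▸ isWeightedHomogeneous_col_det_mvPolynomialX (R := K) l'
  have hg' : (k, l') ∉ g.vars :=
    hrow.notMem_vars_right_of_mem_vars_left hf hg hkl (by simp) (by simp)
  have hf' : (k, l') ∉ f.vars :=
    hcol.notMem_vars_right_of_mem_vars_left hg hf hkl' (by simp) (by simp)
  have hfg' := vars_mul f g (hfg ▸ mem_vars_det_mvPolynomialX (R := K) k l')
  exact (Finset.mem_union.1 hfg').elim hf' hg'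

end Matrix

/-- The determinant of the generic `n × n` matrix over a field `F` is irreducible. -/
theorem det_generic_matrix_irreducible_field (F : Type*) [Field F] (n : ℕ) (hn : 1 ≤ n) :
    Irreducible (Matrix.det (Matrix.of fun i j : Fin n =>
      (MvPolynomial.X (i, j) : MvPolynomial (Fin n × Fin n) F))) :=
  have : Nonempty (Fin n) := ⟨⟨0, hn⟩⟩
  Matrix.irreducible_det_mvPolynomialX
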